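/- Let p_1, ..., p_m be distinct primes and S = {1} ∪ {p_1,...,p_m} ∪ {p_i p_j : 1 ≤ i < j ≤ m}. Then S is GCD closed, the LCM matrix [S] is invertible, and its inertia has i_-([S]) = m negative eigenvalues and i_+([S]) = 1 + C(m,2) positive eigenvalues. -/

import Mathlib

/-!
The set `S` is closed under taking divisors. On such a set, the weight `w = μ * (1 / id)`, for
which `∑_{d ∣ n} w d = 1 / n`, expands `lcm a b = a b / gcd a b` as
`∑_{d ∈ S, d ∣ a, d ∣ b} a w(d) b`, i.e. `[S] = Bᵀ diag(w) B` with `B d x = x` if `d ∣ x` and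
`0` otherwise. `B` is triangular with diagonal `x ≠ 0`, so by Sylvester's law of inertia `[S]` has
the inertia of the sign pattern of `w` on `S`: `w 1 = 1`, `w p = 1/p - 1 < 0` and
`w (p q) = w p * w q > 0`.
-/

open Finset Matrix ArithmeticFunction QuadraticMap

lemma QuadraticMap.weightedSumSquares_eq_dotProduct {R n : Type*} [CommRing R] [Fintype n]
    [DecidableEq n] (w : n → R) (x : n → R) :
    weightedSumSquares R w x = x ⬝ᵥ (diagonal w *ᵥ x) := by
  simp only [weightedSumSquares_apply, dotProduct, mulVec_diagonal, smul_eq_mul]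
  exact sum_congr rfl fun i _ => by ring

lemma QuadraticMap.equivalent_weightedSumSquares_of_diagonal_eq {R n : Type*} [CommRing R]
    [Fintype n] [DecidableEq n] {d₁ d₂ : n → R} {C : Matrix n n R} (hC : IsUnit C)
    (h : diagonal d₁ = Cᵀ * diagonal d₂ * C) :
    (weightedSumSquares R d₁).Equivalent (weightedSumSquares R d₂) := by
  obtain ⟨_⟩ := hC.nonempty_invertible
  refine ⟨⟨C.toLinearEquiv' ‹_›, fun x => ?_⟩⟩
  simp only [weightedSumSquares_eq_dotProduct, h, toLinearEquiv'_apply, Matrix.mul_assoc,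
    ← mulVec_mulVec, dotProduct_mulVec _ Cᵀ, vecMul_transpose]
  rfl

lemma Matrix.IsHermitian.diagonal_eigenvalues_eq {n : Type*} [Fintype n] [DecidableEq n]
    {A : Matrix n n ℝ} (hA : A.IsHermitian) :
    diagonal hA.eigenvalues =
      (hA.eigenvectorUnitary : Matrix n n ℝ)ᵀ * A * hA.eigenvectorUnitary := by
  have h := hA.conjStarAlgAut_star_eigenvectorUnitary
  rw [Unitary.conjStarAlgAut_apply, Unitary.coe_star, star_star, RCLike.ofReal_real_eq_id,
    Function.id_comp, star_eq_conjTranspose, conjTranspose_eq_transpose_of_trivial] at h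
  exact h.symm

lemma Matrix.IsHermitian.inertia_eq_of_congr_diagonal {n : Type*} [Fintype n] [DecidableEq n]
    {A B : Matrix n n ℝ} (hA : A.IsHermitian) (hB : IsUnit B) {d : n → ℝ}
    (h : A = Bᵀ * diagonal d * B) :
    #{i | 0 < hA.eigenvalues i} = #{i | 0 < d i} ∧
      #{i | hA.eigenvalues i < 0} = #{i | d i < 0} := by
  obtain ⟨U, hU, hdiag⟩ : ∃ U : Matrix n n ℝ, IsUnit U ∧ diagonal hA.eigenvalues = Uᵀ * A * U :=
    ⟨_, Unitary.isUnit_coe, hA.diagonal_eigenvalues_eq⟩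
  have hcongr : diagonal hA.eigenvalues = (B * U)ᵀ * diagonal d * (B * U) := by
    rw [hdiag, h, transpose_mul]
    simp only [Matrix.mul_assoc]
  have hequiv := equivalent_weightedSumSquares_of_diagonal_eq (hB.mul hU) hcongr
  have hpos := hequiv.sigPos_eq
  have hneg := hequiv.sigNeg_eq
  rw [QuadraticForm.sigPos_weightedSumSquares, QuadraticForm.sigPos_weightedSumSquares] at hpos
  rw [QuadraticForm.sigNeg_weightedSumSquares, QuadraticForm.sigNeg_weightedSumSquares] at hneg
  simp only [Set.ncard_eq_toFinset_card', Set.toFinset_ofPred] at hpos hneg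
  exact ⟨hpos, hneg⟩

namespace ArithmeticFunction

noncomputable def invId : ArithmeticFunction ℝ := ⟨fun n => (n : ℝ)⁻¹, by simp⟩

@[simp] lemma invId_apply (n : ℕ) : invId n = (n : ℝ)⁻¹ := rfl

lemma isMultiplicative_invId : invId.IsMultiplicative :=
  ⟨by simp, fun _ => by simp [mul_comm]⟩

noncomputable def lcmWeight : ArithmeticFunction ℝ := (moebius : ArithmeticFunction ℝ) * invId

lemma isMultiplicative_lcmWeight : lcmWeight.IsMultiplicative :=
  isMultiplicative_moebius.intCast.mul isMultiplicative_invId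

@[simp] lemma lcmWeight_one : lcmWeight 1 = 1 := isMultiplicative_lcmWeight.map_one

lemma sum_divisors_lcmWeight (n : ℕ) : ∑ d ∈ n.divisors, lcmWeight d = (n : ℝ)⁻¹ := by
  rw [← coe_zeta_mul_apply, lcmWeight, ← mul_assoc, coe_zeta_mul_coe_moebius, one_mul,
    invId_apply]

lemma lcmWeight_prime {p : ℕ} (hp : p.Prime) : lcmWeight p = (p : ℝ)⁻¹ - 1 := by
  have h := sum_divisors_lcmWeight p
  rw [hp.sum_divisors, lcmWeight_one] at h
  linarith

lemma lcmWeight_prime_neg {p : ℕ} (hp : p.Prime) : lcmWeight p < 0 := by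
  rw [lcmWeight_prime hp, sub_neg]
  exact inv_lt_one_of_one_lt₀ (by exact_mod_cast hp.one_lt)

lemma lcmWeight_mul_primes_pos {p q : ℕ} (hp : p.Prime) (hq : q.Prime) (hpq : p ≠ q) :
    0 < lcmWeight (p * q) := by
  rw [isMultiplicative_lcmWeight.map_mul_of_coprime ((Nat.coprime_primes hp hq).mpr hpq)]
  exact mul_pos_of_neg_of_neg (lcmWeight_prime_neg hp) (lcmWeight_prime_neg hq)

end ArithmeticFunction

def Finset.FactorClosed (S : Finset ℕ) : Prop := ∀ x ∈ S, ∀ d, d ∣ x → d ∈ S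

noncomputable def Finset.divisorMulMatrix (S : Finset ℕ) : Matrix S S ℝ :=
  of fun d x => if d.1 ∣ x.1 then (x.1 : ℝ) else 0

lemma Finset.det_divisorMulMatrix (S : Finset ℕ) :
    S.divisorMulMatrix.det = ∏ x : S, (x.1 : ℝ) := by
  rw [det_of_isUpperTriangular]
  · simp [divisorMulMatrix]
  · intro d x hxd
    by_cases hx : x.1 = 0
    · simp [divisorMulMatrix, hx]
    · simp [divisorMulMatrix,
        Nat.not_dvd_of_pos_of_lt (Nat.pos_of_ne_zero hx) (show x.1 < d.1 from hxd)]

namespace Finset.FactorClosed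

variable {S : Finset ℕ} (hS : S.FactorClosed)
include hS

lemma zero_notMem : 0 ∉ S := by
  intro h0
  obtain ⟨n, hn⟩ := S.exists_nat_subset_range
  exact lt_irrefl n (mem_range.mp (hn (hS 0 h0 n (dvd_zero n))))

lemma ne_zero_of_mem {n : ℕ} (hn : n ∈ S) : n ≠ 0 := fun h0 => hS.zero_notMem (h0 ▸ hn)

lemma filter_dvd_eq_divisors {n : ℕ} (hn : n ∈ S) : {d ∈ S | d ∣ n} = n.divisors := by
  ext d
  simp only [mem_filter, Nat.mem_divisors]
  exact ⟨fun h => ⟨h.2, hS.ne_zero_of_mem hn⟩, fun h => ⟨hS n hn d h.1, h.1⟩⟩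

lemma isUnit_divisorMulMatrix : IsUnit S.divisorMulMatrix := by
  rw [isUnit_iff_isUnit_det, det_divisorMulMatrix, isUnit_iff_ne_zero]
  exact prod_ne_zero_iff.mpr fun x _ => Nat.cast_ne_zero.mpr (hS.ne_zero_of_mem x.2)

lemma lcm_matrix_eq :
    (of fun a b : S => (Nat.lcm a b : ℝ)) =
      S.divisorMulMatrixᵀ * diagonal (fun d : S => lcmWeight d) * S.divisorMulMatrix := by
  ext a b
  have hgcd : Nat.gcd a b ∈ S := hS a a.2 _ (Nat.gcd_dvd_left a b)
  have hterm : ∀ d : S, S.divisorMulMatrix d a * (lcmWeight d * S.divisorMulMatrix d b) =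
      (if d.1 ∣ Nat.gcd a b then lcmWeight d else 0) * ((a : ℝ) * b) := by
    intro d
    by_cases hda : d.1 ∣ a <;> by_cases hdb : d.1 ∣ b <;>
      simp [divisorMulMatrix, Nat.dvd_gcd_iff, hda, hdb]
    ring
  have hsum : ∑ d : S, (if d.1 ∣ Nat.gcd a b then lcmWeight d else 0) =
      (Nat.gcd a b : ℝ)⁻¹ := by
    rw [sum_coe_sort S (fun d => if d ∣ Nat.gcd a b then lcmWeight d else 0), ← sum_filter,
      hS.filter_dvd_eq_divisors hgcd, sum_divisors_lcmWeight]
  have hg : (Nat.gcd a b : ℝ) ≠ 0 := Nat.cast_ne_zero.mpr (hS.ne_zero_of_mem hgcd)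
  have hgl : (Nat.gcd a b : ℝ) * Nat.lcm a b = a * b := by exact_mod_cast Nat.gcd_mul_lcm a b
  rw [Matrix.mul_assoc, Matrix.mul_apply, sum_congr rfl fun d _ => by
    rw [transpose_apply, diagonal_mul, hterm], ← sum_mul, hsum, of_apply]
  field_simp
  linarith

lemma det_lcm_matrix :
    (of fun a b : S => (Nat.lcm a b : ℝ)).det = ∏ x : S, ((x : ℝ) ^ 2 * lcmWeight x) := by
  rw [hS.lcm_matrix_eq, det_mul, det_mul, det_transpose, det_diagonal, det_divisorMulMatrix,
    prod_mul_distrib, prod_pow]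
  ring

end Finset.FactorClosed

lemma Finset.card_filter_univ_subtype {α : Type*} (S : Finset α) (P : α → Prop)
    [DecidablePred P] :
    #{x : S | P x} = #{x ∈ S | P x} := by
  rw [← card_map (Function.Embedding.subtype _)]
  congr 1
  ext x
  simp [and_comm]

section PrimeProducts

variable {m : ℕ} (p : Fin m → ℕ)

def pairProducts : Finset ℕ :=
  ((univ ×ˢ univ).filter (fun ij : Fin m × Fin m => ij.1 < ij.2)).image fun ij => p ij.1 * p ij.2

def prodAtMostTwo : Finset ℕ := insert 1 (univ.image p ∪ pairProducts p)

variable {p}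

lemma mem_pairProducts {x : ℕ} : x ∈ pairProducts p ↔ ∃ i j, i < j ∧ p i * p j = x := by
  simp [pairProducts]

lemma mem_prodAtMostTwo {x : ℕ} :
    x ∈ prodAtMostTwo p ↔ x = 1 ∨ (∃ i, p i = x) ∨ ∃ i j, i < j ∧ p i * p j = x := by
  simp [prodAtMostTwo, pairProducts]

variable (hp : ∀ i, (p i).Prime)
include hp

lemma one_notMem_pairProducts : 1 ∉ pairProducts p := by
  rintro hx
  obtain ⟨i, j, -, hij⟩ := mem_pairProducts.mp hx
  exact (hp i).ne_one (Nat.eq_one_of_mul_eq_one_right hij)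

lemma factorClosed_prodAtMostTwo : (prodAtMostTwo p).FactorClosed := by
  intro x hx d hd
  rw [mem_prodAtMostTwo] at hx ⊢
  rcases hx with rfl | ⟨i, rfl⟩ | ⟨i, j, hij, rfl⟩
  · exact Or.inl (Nat.dvd_one.mp hd)
  · rcases (Nat.dvd_prime (hp i)).mp hd with rfl | rfl
    exacts [Or.inl rfl, Or.inr (Or.inl ⟨i, rfl⟩)]
  · obtain ⟨d₁, d₂, hd₁, hd₂, rfl⟩ := Nat.dvd_mul.mp hd
    rcases (Nat.dvd_prime (hp i)).mp hd₁ with rfl | rfl <;>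
      rcases (Nat.dvd_prime (hp j)).mp hd₂ with rfl | rfl
    · exact Or.inl rfl
    · exact Or.inr (Or.inl ⟨j, (one_mul _).symm⟩)
    · exact Or.inr (Or.inl ⟨i, (mul_one _).symm⟩)
    · exact Or.inr (Or.inr ⟨i, j, hij, rfl⟩)

variable (hinj : Function.Injective p)
include hinj

lemma prime_dvd_prime_mul_prime_iff {i j k : Fin m} : p k ∣ p i * p j ↔ k = i ∨ k = j := by
  simp only [(hp k).dvd_mul, Nat.prime_dvd_prime_iff_eq (hp k) (hp _), hinj.eq_iff]

lemma card_pairProducts : #(pairProducts p) = m.choose 2 := by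
  rw [pairProducts, card_image_of_injOn, card_product_filter_lt, card_univ, Fintype.card_fin]
  rintro ⟨i, j⟩ hij ⟨k, l⟩ hkl (h : p i * p j = p k * p l)
  simp only [coe_filter, mem_product, mem_univ, true_and, Set.mem_ofPred_eq] at hij hkl
  have hi := (prime_dvd_prime_mul_prime_iff hp hinj).mp (h ▸ dvd_mul_right (p i) (p j))
  have hj := (prime_dvd_prime_mul_prime_iff hp hinj).mp (h ▸ dvd_mul_left (p j) (p i))
  have hk := (prime_dvd_prime_mul_prime_iff hp hinj).mp (h.symm ▸ dvd_mul_right (p k) (p l))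
  ext <;> simp only <;> omega

lemma lcmWeight_pos_of_mem_pairProducts {x : ℕ} (hx : x ∈ pairProducts p) :
    0 < lcmWeight x := by
  obtain ⟨i, j, hij, rfl⟩ := mem_pairProducts.mp hx
  exact lcmWeight_mul_primes_pos (hp i) (hp j) (hinj.ne hij.ne)

lemma filter_prodAtMostTwo_lcmWeight_neg :
    {x ∈ prodAtMostTwo p | lcmWeight x < 0} = univ.image p := by
  rw [prodAtMostTwo, filter_insert, filter_union, filter_true_of_mem, filter_false_of_mem]
  · simp
  · exact fun x hx => (lcmWeight_pos_of_mem_pairProducts hp hinj hx).not_gt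
  · simp only [mem_image, mem_univ, true_and, forall_exists_index, forall_apply_eq_imp_iff]
    exact fun i => lcmWeight_prime_neg (hp i)

lemma filter_prodAtMostTwo_lcmWeight_pos :
    {x ∈ prodAtMostTwo p | 0 < lcmWeight x} = insert 1 (pairProducts p) := by
  rw [prodAtMostTwo, filter_insert, filter_union, filter_false_of_mem (s := univ.image p),
    filter_true_of_mem (s := pairProducts p)]
  · simp
  · exact fun x hx => lcmWeight_pos_of_mem_pairProducts hp hinj hx
  · simp only [mem_image, mem_univ, true_and, forall_exists_index, forall_apply_eq_imp_iff]
    exact fun i => (lcmWeight_prime_neg (hp i)).not_gt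

lemma lcmWeight_ne_zero_of_mem_prodAtMostTwo {x : ℕ} (hx : x ∈ prodAtMostTwo p) :
    lcmWeight x ≠ 0 := by
  rcases mem_prodAtMostTwo.mp hx with rfl | ⟨i, rfl⟩ | hpair
  · simp
  · exact (lcmWeight_prime_neg (hp i)).ne
  · exact (lcmWeight_pos_of_mem_pairProducts hp hinj (mem_pairProducts.mpr hpair)).ne'

end PrimeProducts

open scoped Classical

theorem stmt19 (m : ℕ) (p : Fin m → ℕ)
    (hp : ∀ i, (p i).Prime) (hinj : Function.Injective p)
    (S : Finset ℕ)
    (hS : S = insert 1 ((Finset.univ.image p) ∪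
      ((Finset.univ ×ˢ Finset.univ).filter (fun ij : Fin m × Fin m => ij.1 < ij.2)).image
        fun ij => p ij.1 * p ij.2))
    (M : Matrix {x // x ∈ S} {x // x ∈ S} ℝ)
    (hMdef : M = Matrix.of fun a b => (Nat.lcm a.1 b.1 : ℝ))
    (hM : M.IsHermitian) :
    (∀ a ∈ S, ∀ b ∈ S, Nat.gcd a b ∈ S) ∧
    M.det ≠ 0 ∧
    (Finset.univ.filter fun i => hM.eigenvalues i < 0).card = m ∧
    (Finset.univ.filter fun i => 0 < hM.eigenvalues i).card = 1 + m.choose 2 := by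
  obtain rfl : S = prodAtMostTwo p := hS
  subst hMdef
  have hfc := factorClosed_prodAtMostTwo hp
  obtain ⟨hpos, hneg⟩ :=
    hM.inertia_eq_of_congr_diagonal hfc.isUnit_divisorMulMatrix hfc.lcm_matrix_eq
  refine ⟨fun a ha b _ => hfc a ha _ (Nat.gcd_dvd_left a b), ?_, ?_, ?_⟩
  · rw [hfc.det_lcm_matrix]
    exact prod_ne_zero_iff.mpr fun x _ =>
      mul_ne_zero (pow_ne_zero _ (Nat.cast_ne_zero.mpr (hfc.ne_zero_of_mem x.2)))
        (lcmWeight_ne_zero_of_mem_prodAtMostTwo hp hinj x.2)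
  · rw [hneg, card_filter_univ_subtype _ (fun x => lcmWeight x < 0),
      filter_prodAtMostTwo_lcmWeight_neg hp hinj, card_image_of_injective _ hinj, card_univ,
      Fintype.card_fin]
  · rw [hpos, card_filter_univ_subtype _ (fun x => 0 < lcmWeight x),
      filter_prodAtMostTwo_lcmWeight_pos hp hinj, card_insert_of_notMem (one_notMem_pairProducts hp),
      card_pairProducts hp hinj, add_comm]
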